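/- Let G be an invertible matrix approximating L⁻¹ (with L the Cholesky factor of A_inn), let Â = A_inn + A_out be SPD, and define Y := I − G Â Gᵀ. Suppose Y = VΣVᵀ is a symmetric eigendecomposition with all eigenvalues of GÂGᵀ positive. Then Â⁻¹ = GᵀG + GᵀVΣ(I − Σ)⁻¹VᵀG. -/

import Mathlib

open Matrix

/-!
Since `1 - Y = G Â Gᵀ`, the decomposition of `Y` diagonalises `G Â Gᵀ` as `V (I - Σ) Vᵀ`, so inverting
gives `Â⁻¹ = Gᵀ V (I - Σ)⁻¹ Vᵀ G`; the formula follows from `(I - Σ)⁻¹ = I + Σ (I - Σ)⁻¹` and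
`V Vᵀ = I`. Invertibility of `I - Σ` is inherited from that of `Â` through the determinant.
-/

namespace Matrix

variable {n K : Type*} [Fintype n] [DecidableEq n] [CommRing K]

theorem det_conj_of_mul_transpose_eq_one {V : Matrix n n K} (hV : V * Vᵀ = 1)
    (D : Matrix n n K) : (V * D * Vᵀ).det = D.det := by
  rw [det_mul, det_mul, mul_right_comm, ← det_mul, hV, det_one, one_mul]

theorem isUnit_det_of_conj_eq_conj {A G V D : Matrix n n K} (hA : IsUnit A.det)
    (hG : IsUnit G.det) (hV : V * Vᵀ = 1) (h : G * A * Gᵀ = V * D * Vᵀ) : IsUnit D.det := by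
  rw [← det_conj_of_mul_transpose_eq_one hV, ← h, det_mul, det_mul, det_transpose]
  exact (hG.mul hA).mul hG

theorem inv_eq_of_conj_eq_conj {A G V D : Matrix n n K} (hA : IsUnit A.det)
    (hG : IsUnit G.det) (hV : V * Vᵀ = 1) (h : G * A * Gᵀ = V * D * Vᵀ) :
    A⁻¹ = Gᵀ * V * D⁻¹ * Vᵀ * G := by
  have hD := isUnit_det_of_conj_eq_conj hA hG hV h
  have hVtV : Vᵀ * V = 1 := mul_eq_one_comm.mp hV
  have hGAX : G * (A * (Gᵀ * V * D⁻¹ * Vᵀ * G)) = G * 1 :=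
    calc G * (A * (Gᵀ * V * D⁻¹ * Vᵀ * G)) = G * A * Gᵀ * V * D⁻¹ * Vᵀ * G := by
          simp only [Matrix.mul_assoc]
      _ = V * D * (Vᵀ * V) * D⁻¹ * Vᵀ * G := by rw [h]; simp only [Matrix.mul_assoc]
      _ = G * 1 := by
        rw [hVtV, Matrix.mul_one, Matrix.mul_assoc V, mul_nonsing_inv _ hD, Matrix.mul_one, hV,
          Matrix.one_mul, Matrix.mul_one]
  exact inv_eq_right_inv (((isUnit_iff_isUnit_det G).mpr hG).mul_left_cancel hGAX)

theorem one_add_mul_inv_one_sub {S : Matrix n n K} (h : IsUnit (1 - S).det) :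
    1 + S * (1 - S)⁻¹ = (1 - S)⁻¹ := by
  calc 1 + S * (1 - S)⁻¹ = (1 - S) * (1 - S)⁻¹ + S * (1 - S)⁻¹ := by rw [mul_nonsing_inv _ h]
    _ = (1 - S)⁻¹ := by rw [← Matrix.add_mul, sub_add_cancel, Matrix.one_mul]

end Matrix

theorem stmt_18_general {n : ℕ} (G V S : Matrix (Fin n) (Fin n) ℝ)
    (Ahat : Matrix (Fin n) (Fin n) ℝ)
    (hAhat : Ahat.PosDef) (hG : IsUnit G.det)
    (hV : V * Vᵀ = 1)
    (hdecomp : 1 - G * Ahat * Gᵀ = V * S * Vᵀ) :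
    Ahat⁻¹ = Gᵀ * G + Gᵀ * V * S * (1 - S)⁻¹ * Vᵀ * G := by
  have hA : IsUnit Ahat.det := (isUnit_iff_isUnit_det _).mp hAhat.isUnit
  have hconj : G * Ahat * Gᵀ = V * (1 - S) * Vᵀ := by
    rw [Matrix.mul_sub, Matrix.sub_mul, Matrix.mul_one, hV, ← hdecomp, sub_sub_cancel]
  calc Ahat⁻¹ = Gᵀ * V * (1 - S)⁻¹ * Vᵀ * G := inv_eq_of_conj_eq_conj hA hG hV hconj
    _ = Gᵀ * V * (1 + S * (1 - S)⁻¹) * Vᵀ * G := by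
      rw [one_add_mul_inv_one_sub (isUnit_det_of_conj_eq_conj hA hG hV hconj)]
    _ = Gᵀ * G + Gᵀ * V * S * (1 - S)⁻¹ * Vᵀ * G := by
      rw [Matrix.mul_add, Matrix.add_mul, Matrix.add_mul, Matrix.mul_one, Matrix.mul_assoc Gᵀ V Vᵀ,
        hV, Matrix.mul_one]
      simp only [Matrix.mul_assoc]

/-- The LRCFSAI correction formula: Â⁻¹ = GᵀG + GᵀVΣ(I−Σ)⁻¹VᵀG (eq. 2.26). -/
theorem stmt_18 {n : ℕ} (Ainn Aout G V S : Matrix (Fin n) (Fin n) ℝ)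
    (Ahat : Matrix (Fin n) (Fin n) ℝ) (hsum : Ahat = Ainn + Aout)
    (hAhat : Ahat.PosDef) (hG : IsUnit G.det)
    (hV : V * Vᵀ = 1) (hS : S.IsDiag)
    (hdecomp : 1 - G * Ahat * Gᵀ = V * S * Vᵀ)
    (hpos : ∀ μ ∈ spectrum ℝ (G * Ahat * Gᵀ), 0 < μ) :
    Ahat⁻¹ = Gᵀ * G + Gᵀ * V * S * (1 - S)⁻¹ * Vᵀ * G :=
  stmt_18_general G V S Ahat hAhat hG hV hdecomp
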